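/- Let ℝ[l₁] and ℝ[l₂]-graded vector spaces H₁ = IH(Δ) and H₂ = IH(Σ) satisfy hard Lefschetz: lᵢᵏ: Hᵢ^{nᵢ−k} → Hᵢ^{nᵢ+k} is an isomorphism for all k ≥ 1. Then l = l₁⊗1 + 1⊗l₂ on H = H₁ ⊗ H₂ satisfies hard Lefschetz: lᵏ: H^{n−k} → H^{n+k} is an isomorphism for all k ≥ 1, where n = n₁ + n₂ and H is graded by total degree. -/

import Mathlib

open TensorProduct

/-- The total-degree grading on the tensor product:
`H^k = ⊕_{i+j=k} H₁ⁱ ⊗ H₂ʲ`. -/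
noncomputable def tensorGrading {H₁ H₂ : Type}
    [AddCommGroup H₁] [Module ℝ H₁] [AddCommGroup H₂] [Module ℝ H₂]
    (A₁ : ℤ → Submodule ℝ H₁) (A₂ : ℤ → Submodule ℝ H₂) (k : ℤ) :
    Submodule ℝ (H₁ ⊗[ℝ] H₂) :=
  ⨆ i : ℤ, LinearMap.range (TensorProduct.map (A₁ i).subtype (A₂ (k - i)).subtype)

open Module Submodule LinearMap

section Sl2Helpers


variable {V : Type} [AddCommGroup V] [Module ℝ V]

/-- `H (E^M x) = E^M (H x) + 2M • E^M x` pointwise. -/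
lemma comm_pow_HE (E H : Module.End ℝ V)
    (hHE : ∀ x, H (E x) - E (H x) = (2:ℝ) • E x) (M : ℕ) (x : V) :
    H ((E ^ M) x) = (E ^ M) (H x) + ((2 * M : ℕ) : ℝ) • (E ^ M) x := by
  induction M generalizing x with
  | zero => simp
  | succ M ih =>
      have h1 : (E ^ (M + 1)) x = E ((E ^ M) x) := by
        rw [pow_succ' E M]; rfl
      have h2 : (E ^ (M + 1)) (H x) = E ((E ^ M) (H x)) := by
        rw [pow_succ' E M]; rfl
      have h3 := hHE ((E ^ M) x)
      rw [h1, h2]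
      have : H (E ((E ^ M) x)) = E (H ((E ^ M) x)) + (2:ℝ) • E ((E ^ M) x) := by
        rw [← h3]; abel
      rw [this, ih x, map_add, map_smul]
      push_cast
      module

/-- `E^{M+1} (F x) = F (E^{M+1} x) + (M+1) • E^M (H x) + (M+1)M • E^M x` pointwise. -/
lemma comm_pow_EF (E H F : Module.End ℝ V)
    (hEF : ∀ x, E (F x) - F (E x) = H x)
    (hHE : ∀ x, H (E x) - E (H x) = (2:ℝ) • E x) (M : ℕ) (x : V) :
    (E ^ (M + 1)) (F x) = F ((E ^ (M + 1)) x)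
      + ((M : ℝ) + 1) • (E ^ M) (H x) + (((M : ℝ) + 1) * M) • (E ^ M) x := by
  induction M generalizing x with
  | zero =>
      have h0 := hEF x
      simp only [zero_add, pow_one, pow_zero, Module.End.one_apply, Nat.cast_zero]
      have h1 : E (F x) = F (E x) + H x := by
        rw [← h0]; abel
      rw [h1]
      module
  | succ M ih =>
      have h1 : (E ^ (M + 2)) (F x) = E ((E ^ (M + 1)) (F x)) := by
        rw [pow_succ' E (M + 1)]; rfl
      have h2 : (E ^ (M + 2)) x = E ((E ^ (M + 1)) x) := by
        rw [pow_succ' E (M + 1)]; rfl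
      have h3 : ∀ y, (E ^ (M + 1)) y = E ((E ^ M) y) := fun y => by
        rw [pow_succ' E M]; rfl
      rw [h1, ih x, map_add, map_add, map_smul, map_smul, h2]
      have h4 : E (F ((E ^ (M + 1)) x)) = F (E ((E ^ (M + 1)) x)) + H ((E ^ (M + 1)) x) := by
        rw [← hEF ((E ^ (M + 1)) x)]; abel
      rw [h4, comm_pow_HE E H hHE (M + 1) x, h3 (H x), h3 x]
      push_cast
      module

/-- Elementary sl₂ fact: on a finite-dimensional module, if `H v = -k • v` and
`E^k v = 0` for some `k ≥ 1`, then `v = 0`. -/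
lemma sl2_weight_inj [FiniteDimensional ℝ V] (E H F : Module.End ℝ V)
    (hEF : ∀ x, E (F x) - F (E x) = H x)
    (hHE : ∀ x, H (E x) - E (H x) = (2:ℝ) • E x)
    (hHF : ∀ x, H (F x) - F (H x) = -((2:ℝ) • F x))
    (k : ℕ) (hk : 1 ≤ k) (v : V) (hv : H v = (-(k : ℝ)) • v)
    (hE : (E ^ k) v = 0) : v = 0 := by
  by_contra hv0
  have hex : ∃ m, (E ^ m) v = 0 := ⟨k, hE⟩
  classical
  set m := Nat.find hex with hm
  have hm0 : (E ^ m) v = 0 := Nat.find_spec hex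
  have hmk : m ≤ k := Nat.find_le hE
  have hm1 : 1 ≤ m := by
    rcases Nat.eq_zero_or_pos m with h | h
    · exfalso; apply hv0; simpa [h] using hm0
    · exact h
  -- the sequence of lowered vectors
  set w : ℕ → V := fun j => (F ^ j) v with hw
  have key : ∀ j : ℕ, H (w j) = (-(k : ℝ) - 2 * j) • w j ∧
      (E ^ (m + j)) (w j) = 0 ∧ (E ^ (m + j - 1)) (w j) ≠ 0 := by
    intro j
    induction j with
    | zero =>
        refine ⟨by simpa [hw] using hv, by simpa [hw] using hm0, ?_⟩
        simpa [hw] using Nat.find_min hex (m := m - 1) (by omega)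
    | succ j ih =>
        obtain ⟨ih1, ih2, ih3⟩ := ih
        have hwj : w (j + 1) = F (w j) := by
          simp only [hw]
          rw [pow_succ' F j]
          rfl
        have μdef : (-(k:ℝ) - 2 * (j+1 : ℕ)) = (-(k:ℝ) - 2*j) - 2 := by push_cast; ring
        constructor
        · rw [hwj, μdef]
          have h5 := hHF (w j)
          rw [sub_eq_iff_eq_add] at h5
          rw [h5, ih1, map_smul]
          module
        constructor
        · -- E^{m+j+1} (F w j) = 0
          rw [hwj]
          have hc := comm_pow_EF E H F hEF hHE (m + j) (w j)
          rw [show m + (j+1) = m + j + 1 from by omega, hc, ih1, map_smul]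
          have e1 : (E ^ (m + j + 1)) (w j) = E ((E ^ (m + j)) (w j)) := by
            rw [pow_succ' E (m + j)]; rfl
          rw [e1, ih2, map_zero]
          simp only [map_zero, smul_zero, add_zero, zero_add]
        · -- E^{m+j} (F w j) ≠ 0
          rw [hwj, show m + (j+1) - 1 = m + j from by omega]
          have hc := comm_pow_EF E H F hEF hHE (m + j - 1) (w j)
          rw [show (m + j - 1) + 1 = m + j from by omega] at hc
          rw [hc, ih1, map_smul, ih2, map_zero, zero_add]
          set c : ℝ := ((m + j - 1 : ℕ) : ℝ) with hcdef
          rw [smul_smul, ← add_smul]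
          apply smul_ne_zero _ ih3
          have h1 : c = (m : ℝ) + j - 1 := by
            rw [hcdef]; push_cast [Nat.cast_sub (by omega : 1 ≤ m + j)]; ring
          have hmk' : (m : ℝ) ≤ (k : ℝ) := by exact_mod_cast hmk
          have hj0 : (0:ℝ) ≤ j := Nat.cast_nonneg j
          have hfac : (c + 1) * (-(k:ℝ) - 2*j) + (c + 1) * c = (c+1) * ((-(k:ℝ) - 2*j) + c) := by
            ring
          rw [hfac]
          apply mul_ne_zero
          · rw [h1]; have : (1:ℝ) ≤ (m:ℝ) := by exact_mod_cast hm1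
            nlinarith
          · rw [h1]
            have : (1:ℝ) ≤ (m:ℝ) := by exact_mod_cast hm1
            nlinarith
  -- infinitely many eigenvectors with distinct eigenvalues: contradiction
  have hwne : ∀ j, w j ≠ 0 := by
    intro j hj
    have := (key j).2.2
    apply this
    rw [hj, map_zero]
  set d := finrank ℝ V
  have hli : LinearIndependent ℝ (fun j : Fin (d + 1) => w j) := by
    apply Module.End.eigenvectors_linearIndependent' H (fun j : Fin (d+1) => (-(k:ℝ) - 2 * j))
    · intro a b hab
      simp only at hab
      have : (a : ℝ) = b := by
        have : (2:ℝ) * a = 2 * b := by linarith [hab]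
        linarith
      exact Fin.ext (by exact_mod_cast this)
    · intro j
      refine ⟨?_, hwne j⟩
      rw [Module.End.mem_eigenspace_iff]
      exact (key j).1
  have := hli.fintype_card_le_finrank
  simp [d] at this



variable {V : Type} [AddCommGroup V] [Module ℝ V]

lemma pow_mem_of_deg (l : Module.End ℝ V) (B : ℤ → Submodule ℝ V)
    (hdeg : ∀ j, Submodule.map l (B j) ≤ B (j + 2)) :
    ∀ (t : ℕ) (j : ℤ), ∀ x ∈ B j, (l ^ t) x ∈ B (j + 2 * t) := by
  intro t
  induction t with
  | zero => intro j x hx; simpa using hx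
  | succ t ih =>
      intro j x hx
      have h1 : (l ^ (t + 1)) x = l ((l ^ t) x) := by rw [pow_succ' l t]; rfl
      have h2 := hdeg (j + 2 * t) (Submodule.mem_map_of_mem (ih j x hx))
      rw [h1]
      have h3 : j + 2 * ((t : ℕ) + 1 : ℕ) = j + 2 * t + 2 := by push_cast; ring
      rw [h3]
      exact h2

lemma exists_lowering_trivial (l : Module.End ℝ V) (n : ℤ) (B : ℤ → Submodule ℝ V)
    (h : ∀ j, j ≠ n → B j = ⊥) :
    ∃ f : Module.End ℝ V,
      (∀ j, Submodule.map f (B j) ≤ B (j - 2)) ∧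
      (∀ j, ∀ x ∈ B j, l (f x) - f (l x) = ((j : ℝ) - (n : ℝ)) • x) := by
  refine ⟨0, fun j => by simp, ?_⟩
  intro j x hx
  by_cases hj : j = n
  · subst hj; simp
  · have := h j hj
    rw [this] at hx
    have : x = 0 := by simpa using hx
    simp [this]

lemma exists_lowering [FiniteDimensional ℝ V] (l : Module.End ℝ V) (n : ℤ) :
    ∀ (N : ℕ) (B : ℤ → Submodule ℝ V),
      finrank ℝ ↥(⨆ j, B j) ≤ N →
      iSupIndep B →
      (∀ j, Submodule.map l (B j) ≤ B (j + 2)) →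
      (∀ k : ℕ, 1 ≤ k →
        Submodule.map (l ^ k) (B (n - k)) = B (n + k) ∧
        ∀ x ∈ B (n - k), (l ^ k) x = 0 → x = 0) →
      ∃ f : Module.End ℝ V,
        (∀ j, Submodule.map f (B j) ≤ B (j - 2)) ∧
        (∀ j, ∀ x ∈ B j, l (f x) - f (l x) = ((j : ℝ) - (n : ℝ)) • x) := by
  intro N
  induction N with
  | zero =>
      intro B hN hind hdeg hHL
      have hsup : (⨆ j, B j) = ⊥ := by
        rw [← Submodule.finrank_eq_zero]
        omega
      refine exists_lowering_trivial l n B fun j _ => ?_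
      exact le_bot_iff.mp (hsup ▸ le_iSup B j)
  | succ N IH =>
      intro B hN hind hdeg hHL
      classical
      haveI := hind.fintypeNeBotOfFiniteDimensional
      have hSfin : {j : ℤ | B j ≠ ⊥}.Finite :=
        Set.finite_coe_iff.mp (Finite.of_fintype {j : ℤ // B j ≠ ⊥})
      set K : Set ℕ := {k : ℕ | B (n - k) ≠ ⊥ ∨ B (n + k) ≠ ⊥} with hKdef
      have hKsub : K ⊆ (fun j => (j - n).natAbs) '' {j | B j ≠ ⊥} := by
        intro k hk
        rcases hk with h | h
        · exact ⟨n - k, h, by show ((n - (k:ℤ)) - n).natAbs = k; omega⟩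
        · exact ⟨n + k, h, by show ((n + (k:ℤ)) - n).natAbs = k; omega⟩
      have hKfin : K.Finite := Set.Finite.subset (Set.Finite.image _ hSfin) hKsub
      by_cases hKne : K.Nonempty
      swap
      · refine exists_lowering_trivial l n B fun j hj => ?_
        by_contra hne
        apply hKne
        refine ⟨(j - n).natAbs, ?_⟩
        rcases le_or_gt n j with h | h
        · right
          rw [show n + ((j - n).natAbs : ℤ) = j from by omega]
          exact hne
        · left
          rw [show n - ((j - n).natAbs : ℤ) = j from by omega]
          exact hne
      obtain ⟨kw, hkw⟩ := hKne
      set k0 : ℕ := hKfin.toFinset.max' ⟨kw, hKfin.mem_toFinset.mpr hkw⟩ with hk0def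
      have hk0K : k0 ∈ K := hKfin.mem_toFinset.mp (hKfin.toFinset.max'_mem _)
      have hk0max : ∀ k ∈ K, k ≤ k0 := fun k hk =>
        Finset.le_max' _ _ (hKfin.mem_toFinset.mpr hk)
      have hzero : ∀ j : ℤ, ((n : ℤ) + k0 < j ∨ j < n - k0) → B j = ⊥ := by
        intro j hj
        by_contra hne
        have hk : (j - n).natAbs ∈ K := by
          rcases le_or_gt n j with h | h
          · right
            rw [show n + ((j - n).natAbs : ℤ) = j from by omega]
            exact hne
          · left
            rw [show n - ((j - n).natAbs : ℤ) = j from by omega]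
            exact hne
        have := hk0max _ hk
        omega
      by_cases hk01 : k0 = 0
      · refine exists_lowering_trivial l n B fun j hj => hzero j (by omega)
      have hk0pos : 1 ≤ k0 := by omega
      have hb : B (n - k0) ≠ ⊥ := by
        rcases hk0K with h | h
        · exact h
        · intro hbot
          apply h
          rw [← (hHL k0 hk0pos).1, hbot, Submodule.map_bot]
      obtain ⟨v, hvmem, hv0⟩ := (Submodule.ne_bot_iff _).mp hb
      set sv : ℕ → V := fun t => (l ^ t) v with hsv
      have svmem : ∀ t : ℕ, sv t ∈ B (n - k0 + 2 * t) := fun t =>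
        pow_mem_of_deg l B hdeg t _ v hvmem
      have svsucc : ∀ t : ℕ, sv (t + 1) = l (sv t) := by
        intro t
        simp only [hsv]
        rw [pow_succ' l t]
        rfl
      have svtop0 : sv (k0 + 1) = 0 := by
        have h1 := svmem (k0 + 1)
        rw [show (n:ℤ) - k0 + 2 * ((k0 + 1 : ℕ) : ℤ) = n + k0 + 2 from by push_cast; ring] at h1
        rw [hzero (n + k0 + 2) (by omega)] at h1
        simpa using h1
      have svzero : ∀ t : ℕ, k0 < t → sv t = 0 := by
        intro t
        induction t with
        | zero => omega
        | succ s ih =>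
            intro ht
            rcases Nat.lt_or_ge k0 s with h | h
            · rw [svsucc, ih h, map_zero]
            · have hs : s = k0 := by omega
              rw [hs]; exact svtop0
      have svtopne : sv k0 ≠ 0 := by
        intro h
        exact hv0 ((hHL k0 hk0pos).2 v hvmem h)
      -- construction of the graded functional `lam`
      set X : Submodule ℝ V := ⨆ (p : ℤ) (_ : p ≠ n + k0), B p with hX
      have hdisjX : Disjoint (B (n + k0)) X := hind (n + k0)
      have hBX : B (n + k0) ⊔ X = ⨆ j, B j := by
        apply le_antisymm
        · apply sup_le (le_iSup B _)
          exact iSup_le fun p => iSup_le fun _ => le_iSup B p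
        · apply iSup_le
          intro p
          by_cases hp : p = n + k0
          · rw [hp]; exact le_sup_left
          · exact le_trans (le_iSup₂ (f := fun (p : ℤ) (_ : p ≠ n + k0) => B p) p hp)
              le_sup_right
      obtain ⟨E', hE'⟩ := Submodule.exists_isCompl (⨆ j, B j)
      have hcompl : IsCompl (B (n + k0)) (X ⊔ E') := by
        constructor
        · apply Submodule.disjoint_def.mpr
          intro x hxB hxD
          obtain ⟨y, hy, e, he, hye⟩ := Submodule.mem_sup.mp hxD
          have he0 : e = 0 := by
            have h1 : e ∈ (⨆ j, B j) ⊓ E' := by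
              constructor
              · have : e = x - y := by rw [← hye]; abel
                rw [this]
                apply Submodule.sub_mem
                · exact le_iSup B (n + k0) hxB
                · exact (le_trans le_sup_right hBX.le : X ≤ ⨆ j, B j) hy
              · exact he
            rw [disjoint_iff.mp hE'.disjoint] at h1
            simpa using h1
          have hxy : x = y := by rw [← hye, he0, add_zero]
          exact Submodule.disjoint_def.mp hdisjX x hxB (hxy ▸ hy)
        · rw [codisjoint_iff, ← sup_assoc, hBX]
          exact codisjoint_iff.mp hE'.codisjoint
      set π := Submodule.linearProjOfIsCompl _ _ hcompl with hπ
      have hsvtopmem : sv k0 ∈ B (n + k0) := by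
        have := svmem k0
        rw [show (n:ℤ) - k0 + 2 * (k0 : ℕ) = n + k0 from by push_cast; ring] at this
        exact this
      set w : ↥(B (n + k0)) := ⟨sv k0, hsvtopmem⟩ with hwdef
      have hw0 : w ≠ 0 := fun h => svtopne (congrArg Subtype.val h)
      obtain ⟨C, hC⟩ := Submodule.exists_isCompl (ℝ ∙ w)
      set gproj := Submodule.linearProjOfIsCompl _ _ hC with hgproj
      set eqw := LinearEquiv.toSpanNonzeroSingleton ℝ _ w hw0 with heqw
      set g : ↥(B (n + k0)) →ₗ[ℝ] ℝ := eqw.symm.toLinearMap ∘ₗ gproj with hg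
      set lam : V →ₗ[ℝ] ℝ := g ∘ₗ π with hlam
      have lamtop : lam (sv k0) = 1 := by
        rw [hlam]
        simp only [LinearMap.comp_apply]
        have h1 : π (sv k0) = w := Submodule.linearProjOfIsCompl_apply_left hcompl w
        rw [h1, hg]
        simp only [LinearMap.comp_apply]
        have h2 : gproj w = ⟨w, Submodule.mem_span_singleton_self w⟩ := by
          have := Submodule.linearProjOfIsCompl_apply_left hC
            ⟨w, Submodule.mem_span_singleton_self w⟩
          exact this
        rw [h2]
        have h3 : eqw 1 = ⟨w, Submodule.mem_span_singleton_self w⟩ := by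
          apply Subtype.ext
          simp [heqw]
        rw [← h3]
        simp
      have U1 : ∀ p : ℤ, p ≠ n + k0 → ∀ x ∈ B p, lam x = 0 := by
        intro p hp x hx
        have hxX : x ∈ X ⊔ E' :=
          Submodule.mem_sup_left ((le_iSup₂ (f := fun (p : ℤ) (_ : p ≠ n + k0) => B p) p hp) hx)
        rw [hlam]
        simp only [LinearMap.comp_apply]
        rw [show π x = 0 from Submodule.projectionOnto_apply_of_mem_right hcompl hxX, map_zero]
      have lam_sv : ∀ s t : ℕ, lam ((l ^ t) (sv s)) = if s + t = k0 then 1 else 0 := by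
        intro s t
        have h1 : (l ^ t) (sv s) = sv (s + t) := by
          simp only [hsv]
          rw [← Module.End.mul_apply, ← pow_add, Nat.add_comm t s]
        rw [h1]
        rcases lt_trichotomy (s + t) k0 with h | h | h
        · rw [if_neg (by omega)]
          exact U1 (n - k0 + 2 * (s + t)) (by omega) _ (svmem (s + t))
        · rw [h, if_pos rfl]
          exact lamtop
        · rw [if_neg (by omega), svzero _ h, map_zero]
      -- the complementary grading
      set e : ℤ → ℕ := fun j => ((n + k0 - j).toNat) / 2 with he
      set B' : ℤ → Submodule ℝ V := fun j => B j ⊓ LinearMap.ker (lam ∘ₗ (l ^ (e j)))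
        with hB'
      have hB'mem : ∀ j x, x ∈ B' j ↔ x ∈ B j ∧ lam ((l ^ (e j)) x) = 0 := by
        intro j x
        rw [hB']
        simp only [Submodule.mem_inf, LinearMap.mem_ker, LinearMap.comp_apply]
      have hU2 : ∀ j, ∀ x ∈ B' j, ∀ m : ℕ, lam ((l ^ m) x) = 0 := by
        intro j x hx m
        obtain ⟨hxB, hxk⟩ := (hB'mem j x).mp hx
        by_cases hc : j + 2 * (m : ℤ) = n + k0
        · have hm : e j = m := by simp only [he]; omega
          rw [← hm]
          exact hxk
        · exact U1 _ (by omega) _ (pow_mem_of_deg l B hdeg m j x hxB)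
      have hdeg' : ∀ j, Submodule.map l (B' j) ≤ B' (j + 2) := by
        rintro j y ⟨x, hx, rfl⟩
        rw [hB'mem]
        constructor
        · exact hdeg j (Submodule.mem_map_of_mem ((hB'mem j x).mp hx).1)
        · have h1 : (l ^ (e (j + 2))) (l x) = (l ^ (e (j + 2) + 1)) x := by
            rw [pow_succ]; rfl
          rw [h1]
          exact hU2 j x hx _
      have hHL' : ∀ k : ℕ, 1 ≤ k →
          Submodule.map (l ^ k) (B' (n - k)) = B' (n + k) ∧
          ∀ x ∈ B' (n - k), (l ^ k) x = 0 → x = 0 := by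
        intro k hk
        constructor
        · apply le_antisymm
          · rintro y ⟨x, hx, rfl⟩
            rw [hB'mem]
            constructor
            · have h1 := pow_mem_of_deg l B hdeg k _ x ((hB'mem _ x).mp hx).1
              rw [show (n:ℤ) - k + 2 * k = n + k from by push_cast; ring] at h1
              exact h1
            · rw [← Module.End.mul_apply, ← pow_add]
              exact hU2 _ x hx (e (n + k) + k)
          · intro y hy
            by_cases hbk : B (n + (k : ℤ)) = ⊥
            · have hy0 : y = 0 := by
                have := ((hB'mem _ y).mp hy).1
                rw [hbk] at this
                simpa using this
              rw [hy0]
              exact Submodule.zero_mem _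
            · have hkk0 : k ≤ k0 := hk0max k (Or.inr hbk)
              have hyB := ((hB'mem _ y).mp hy).1
              rw [← (hHL k hk).1] at hyB
              obtain ⟨x, hx, rfl⟩ := hyB
              refine Submodule.mem_map_of_mem ((hB'mem _ x).mpr ⟨hx, ?_⟩)
              by_cases hc : (n - (k:ℤ)) + 2 * ((e (n - k)) : ℤ) = n + k0
              · have hee : e (n - k) = e (n + k) + k := by
                  simp only [he]; omega
                rw [hee, pow_add, Module.End.mul_apply]
                exact ((hB'mem _ _).mp hy).2
              · exact U1 _ (by omega) _ (pow_mem_of_deg l B hdeg _ _ x hx)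
        · intro x hx hxk
          exact (hHL k hk).2 x ((hB'mem _ x).mp hx).1 hxk
      have hind' : iSupIndep B' := hind.mono fun j => inf_le_left
      have hsupker : ∀ m : ℕ, (⨆ j, B' j) ≤ LinearMap.ker (lam ∘ₗ (l ^ m)) := by
        intro m
        apply iSup_le
        intro j x hx
        rw [LinearMap.mem_ker, LinearMap.comp_apply]
        exact hU2 j x hx m
      have hvnot : v ∉ ⨆ j, B' j := by
        intro hv
        have h1 := hsupker k0 hv
        rw [LinearMap.mem_ker, LinearMap.comp_apply] at h1
        have h2 : lam (sv k0) = 0 := h1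
        rw [lamtop] at h2
        exact one_ne_zero h2
      have hle : (⨆ j, B' j) ≤ ⨆ j, B j :=
        iSup_le fun j => le_trans inf_le_left (le_iSup B j)
      have hlt : (⨆ j, B' j) < ⨆ j, B j :=
        lt_of_le_of_ne hle fun h => hvnot (h ▸ (le_iSup B (n - k0)) hvmem)
      have hfr := Submodule.finrank_lt_finrank_of_lt hlt
      obtain ⟨f', hf'deg, hf'rel⟩ := IH B' (by omega) hind' hdeg' hHL'
      -- the string span and a compatible projection
      set S : Submodule ℝ V := Submodule.span ℝ (Set.range fun t : Fin (k0 + 1) => sv t)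
        with hS
      have hSd : Disjoint S (⨆ j, B' j) := by
        apply Submodule.disjoint_def.mpr
        intro x hxS hxB'
        obtain ⟨c, hc⟩ := (mem_span_range_iff_exists_fun ℝ).mp hxS
        have hcoef : ∀ t0 : Fin (k0 + 1), c t0 = 0 := by
          intro t0
          have h1 : lam ((l ^ (k0 - (t0 : ℕ))) x) = 0 := by
            have := hsupker (k0 - (t0 : ℕ)) hxB'
            rw [LinearMap.mem_ker, LinearMap.comp_apply] at this
            exact this
          rw [← hc, map_sum, map_sum] at h1
          rw [← h1]
          rw [Finset.sum_eq_single t0]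
          · rw [map_smul, map_smul, lam_sv _ _, if_pos (by omega), smul_eq_mul, mul_one]
          · intro i _ hi
            rw [map_smul, map_smul, lam_sv _ _, if_neg (by omega), smul_eq_mul, mul_zero]
          · intro hn
            exact absurd (Finset.mem_univ t0) hn
        have : x = 0 := by
          rw [← hc]
          apply Finset.sum_eq_zero
          intro i _
          rw [hcoef i, zero_smul]
        exact this
      obtain ⟨R, hR⟩ := Submodule.exists_isCompl ((⨆ j, B' j) ⊔ S)
      have hQ : IsCompl (⨆ j, B' j) (S ⊔ R) := by
        constructor
        · apply Submodule.disjoint_def.mpr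
          intro x hx hxQ
          obtain ⟨s, hs, r, hr, hsr⟩ := Submodule.mem_sup.mp hxQ
          have hr0 : r = 0 := by
            have h1 : r ∈ ((⨆ j, B' j) ⊔ S) ⊓ R := by
              constructor
              · have : r = x - s := by rw [← hsr]; abel
                rw [this]
                exact Submodule.sub_mem _ (Submodule.mem_sup_left hx)
                  (Submodule.mem_sup_right hs)
              · exact hr
            rw [disjoint_iff.mp hR.disjoint] at h1
            simpa using h1
          have hxs : x = s := by rw [← hsr, hr0, add_zero]
          exact Submodule.disjoint_def.mp hSd x (hxs ▸ hs) hx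
        · rw [codisjoint_iff, ← sup_assoc]
          exact codisjoint_iff.mp hR.codisjoint
      set π' := Submodule.linearProjOfIsCompl _ _ hQ with hπ'
      set f'' : Module.End ℝ V := f' ∘ₗ (Submodule.subtype _) ∘ₗ π' with hf''
      have hf''B' : ∀ j, ∀ x ∈ B' j, f'' x = f' x := by
        intro j x hx
        rw [hf'']
        simp only [LinearMap.comp_apply]
        have hxmem : x ∈ ⨆ j, B' j := (le_iSup B' j) hx
        have h1 : π' x = ⟨x, hxmem⟩ :=
          Submodule.linearProjOfIsCompl_apply_left hQ ⟨x, hxmem⟩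
        rw [h1]
        rfl
      have hf''sv : ∀ t : ℕ, f'' (sv t) = 0 := by
        intro t
        rcases le_or_gt t k0 with h | h
        · have hmem : sv t ∈ S ⊔ R := by
            apply Submodule.mem_sup_left
            apply Submodule.subset_span
            exact ⟨⟨t, by omega⟩, rfl⟩
          rw [hf'']
          simp only [LinearMap.comp_apply]
          rw [show π' (sv t) = 0 from Submodule.projectionOnto_apply_of_mem_right hQ hmem]
          simp
        · rw [svzero t h]
          simp
      -- the string lowering operator
      set fS : Module.End ℝ V := ∑ t ∈ Finset.range (k0 + 1),
          ((t : ℝ) * ((k0 : ℝ) - t + 1)) • ((lam ∘ₗ (l ^ (k0 - t))).smulRight (sv (t - 1)))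
        with hfS
      have hfSapply : ∀ x, fS x = ∑ t ∈ Finset.range (k0 + 1),
          ((t : ℝ) * ((k0 : ℝ) - t + 1)) • (lam ((l ^ (k0 - t)) x) • sv (t - 1)) := by
        intro x
        rw [hfS, LinearMap.sum_apply]
        apply Finset.sum_congr rfl
        intro t _
        rw [LinearMap.smul_apply, LinearMap.smulRight_apply, LinearMap.comp_apply]
      have hfSB' : ∀ j, ∀ x ∈ B' j, fS x = 0 := by
        intro j x hx
        rw [hfSapply]
        apply Finset.sum_eq_zero
        intro t _
        rw [hU2 j x hx, zero_smul, smul_zero]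
      have hfSsv : ∀ s : ℕ, s ≤ k0 →
          fS (sv s) = ((s : ℝ) * ((k0 : ℝ) - s + 1)) • sv (s - 1) := by
        intro s hs
        rw [hfSapply]
        rw [Finset.sum_eq_single s]
        · rw [lam_sv s (k0 - s), if_pos (by omega), one_smul]
        · intro t ht hts
          rw [lam_sv s (k0 - t), if_neg ?_, zero_smul, smul_zero]
          have := Finset.mem_range.mp ht
          omega
        · intro hsnot
          exact absurd (Finset.mem_range.mpr (by omega)) hsnot
      set f : Module.End ℝ V := f'' + fS with hf
      -- decomposition of a graded vector into string and complement parts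
      have hdec : ∀ j : ℤ, ∀ x ∈ B j, lam ((l ^ (e j)) x) ≠ 0 →
          (e j ≤ k0 ∧ j = n + k0 - 2 * (e j) ∧ sv (k0 - e j) ∈ B j ∧
            x - lam ((l ^ (e j)) x) • sv (k0 - e j) ∈ B' j) := by
        intro j x hxB hne
        have hj1 : j + 2 * ((e j) : ℤ) = n + k0 := by
          by_contra hc
          exact hne (U1 _ (by omega) _ (pow_mem_of_deg l B hdeg _ _ x hxB))
        have hj2 : ¬(j < n - k0) := by
          intro hc
          apply hne
          have hx0 : x = 0 := by
            have := hzero j (Or.inr hc)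
            rw [this] at hxB
            simpa using hxB
          rw [hx0]
          simp
        have hek : e j ≤ k0 := by omega
        have hsvmemj : sv (k0 - e j) ∈ B j := by
          have h1 := svmem (k0 - e j)
          rw [show (n:ℤ) - k0 + 2 * ((k0 - e j : ℕ) : ℤ) = j from by
            push_cast [Nat.cast_sub hek]; omega] at h1
          exact h1
        refine ⟨hek, by omega, hsvmemj, ?_⟩
        rw [hB'mem]
        constructor
        · exact Submodule.sub_mem _ hxB (Submodule.smul_mem _ _ hsvmemj)
        · rw [map_sub, map_smul, map_sub, map_smul, lam_sv (k0 - e j) (e j),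
            if_pos (by omega)]
          simp
      -- degree property of f
      have hfdeg : ∀ j, Submodule.map f (B j) ≤ B (j - 2) := by
        rintro j y ⟨x, hx, rfl⟩
        by_cases hc : lam ((l ^ (e j)) x) = 0
        · have hxB' : x ∈ B' j := (hB'mem j x).mpr ⟨hx, hc⟩
          rw [hf]
          simp only [LinearMap.add_apply]
          rw [hf''B' j x hxB', hfSB' j x hxB', add_zero]
          exact ((hB'mem _ _).mp (hf'deg j (Submodule.mem_map_of_mem hxB'))).1
        · obtain ⟨hek, hjeq, hsvm, hxB'⟩ := hdec j x hx hc
          set cx := lam ((l ^ (e j)) x) with hcx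
          set t := k0 - e j with ht
          have hxsplit : x = cx • sv t + (x - cx • sv t) := by abel
          rw [hf]
          simp only [LinearMap.add_apply]
          have h1 : f'' x = f' (x - cx • sv t) := by
            conv_lhs => rw [hxsplit]
            rw [map_add, map_smul, hf''sv, smul_zero, zero_add, hf''B' j _ hxB']
          have h2 : fS x = cx • (((t : ℝ) * ((k0 : ℝ) - t + 1)) • sv (t - 1)) := by
            conv_lhs => rw [hxsplit]
            rw [map_add, map_smul, hfSsv t (by omega), hfSB' j _ hxB', add_zero]
          rw [h1, h2]
          apply Submodule.add_mem
          · exact ((hB'mem _ _).mp (hf'deg j (Submodule.mem_map_of_mem hxB'))).1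
          · rcases Nat.eq_zero_or_pos t with h0 | h0
            · rw [h0]
              norm_num
            · apply Submodule.smul_mem
              apply Submodule.smul_mem
              have h3 := svmem (t - 1)
              rw [show (n:ℤ) - k0 + 2 * ((t - 1 : ℕ) : ℤ) = j - 2 from by
                push_cast [Nat.cast_sub (by omega : 1 ≤ t), Nat.cast_sub hek]; omega] at h3
              exact h3
      -- commutation relation on string vectors
      have hrel_sv : ∀ t : ℕ, t ≤ k0 →
          l (f (sv t)) - f (l (sv t)) = (2 * (t : ℝ) - k0) • sv t := by
        intro t ht
        have hfsvt : f (sv t) = ((t : ℝ) * ((k0 : ℝ) - t + 1)) • sv (t - 1) := by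
          rw [hf]
          simp only [LinearMap.add_apply]
          rw [hf''sv, hfSsv t ht, zero_add]
        have hlsmul : l (((t : ℝ) * ((k0 : ℝ) - t + 1)) • sv (t - 1)) =
            ((t : ℝ) * ((k0 : ℝ) - t + 1)) • sv t := by
          rcases Nat.eq_zero_or_pos t with h0 | h0
          · rw [h0]
            norm_num
          · rw [map_smul]
            congr 1
            rw [← svsucc (t - 1), show t - 1 + 1 = t from by omega]
        rw [hfsvt, hlsmul, ← svsucc t]
        rcases Nat.lt_or_ge t k0 with hlt2 | hge
        · have h4 : f (sv (t + 1)) =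
              (((t : ℝ) + 1) * ((k0 : ℝ) - ((t : ℝ) + 1) + 1)) • sv t := by
            rw [hf]
            simp only [LinearMap.add_apply]
            rw [hf''sv, hfSsv (t + 1) (by omega), zero_add]
            simp only [Nat.add_sub_cancel]
            norm_num
          rw [h4, ← sub_smul]
          congr 1
          ring
        · have ht2 : t = k0 := by omega
          rw [ht2, svtop0, map_zero, sub_zero]
          congr 1
          ring
      have hrel_B' : ∀ j, ∀ x ∈ B' j, l (f x) - f (l x) = ((j : ℝ) - (n : ℝ)) • x := by
        intro j x hx
        have h1 : f x = f' x := by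
          rw [hf]
          simp only [LinearMap.add_apply]
          rw [hf''B' j x hx, hfSB' j x hx, add_zero]
        have hlx : l x ∈ B' (j + 2) := hdeg' j (Submodule.mem_map_of_mem hx)
        have h2 : f (l x) = f' (l x) := by
          rw [hf]
          simp only [LinearMap.add_apply]
          rw [hf''B' _ _ hlx, hfSB' _ _ hlx, add_zero]
        rw [h1, h2]
        exact hf'rel j x hx
      refine ⟨f, hfdeg, ?_⟩
      intro j x hx
      by_cases hc : lam ((l ^ (e j)) x) = 0
      · exact hrel_B' j x ((hB'mem j x).mpr ⟨hx, hc⟩)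
      · obtain ⟨hek, hjeq, hsvm, hxB'⟩ := hdec j x hx hc
        set cx := lam ((l ^ (e j)) x) with hcx
        set t := k0 - e j with ht
        have hxsplit : x = cx • sv t + (x - cx • sv t) := by abel
        have hco : ((j : ℝ) - (n : ℝ)) = 2 * (t : ℝ) - k0 := by
          have hjr : (j : ℝ) = (n : ℝ) + (k0 : ℝ) - 2 * ((e j : ℕ) : ℝ) := by
            exact_mod_cast congrArg (Int.cast : ℤ → ℝ) hjeq
          have htr : (t : ℝ) = (k0 : ℝ) - ((e j : ℕ) : ℝ) := by
            rw [ht]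
            push_cast [Nat.cast_sub hek]
            ring
          rw [hjr, htr]
          ring
        have hstep : l (f x) - f (l x) =
            cx • (l (f (sv t)) - f (l (sv t))) +
              (l (f (x - cx • sv t)) - f (l (x - cx • sv t))) := by
          conv_lhs => rw [hxsplit]
          simp only [map_add, map_smul]
          module
        rw [hstep, hrel_sv t (by omega), hrel_B' j _ hxB', hco]
        module


end Sl2Helpers

section TGHelpers

variable {H₁ H₂ : Type}
    [AddCommGroup H₁] [Module ℝ H₁] [FiniteDimensional ℝ H₁]
    [AddCommGroup H₂] [Module ℝ H₂] [FiniteDimensional ℝ H₂]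
    (A₁ : ℤ → Submodule ℝ H₁) (A₂ : ℤ → Submodule ℝ H₂)

lemma tmul_mem_tG (i j : ℤ) (a : H₁) (b : H₂) (ha : a ∈ A₁ i) (hb : b ∈ A₂ j) :
    a ⊗ₜ[ℝ] b ∈ tensorGrading A₁ A₂ (i + j) := by
  have hb' : b ∈ A₂ ((i + j) - i) := by rwa [show i + j - i = j from by ring]
  have hmem : a ⊗ₜ[ℝ] b ∈
      LinearMap.range (TensorProduct.map (A₁ i).subtype (A₂ ((i + j) - i)).subtype) :=
    ⟨⟨a, ha⟩ ⊗ₜ ⟨b, hb'⟩, by simp [TensorProduct.map_tmul]⟩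
  exact le_iSup
    (fun i' => LinearMap.range
      (TensorProduct.map (A₁ i').subtype (A₂ ((i + j) - i')).subtype)) i hmem

lemma tG_le (m : ℤ) (p : Submodule ℝ (H₁ ⊗[ℝ] H₂))
    (hp : ∀ (i : ℤ) (a : H₁) (b : H₂), a ∈ A₁ i → b ∈ A₂ (m - i) → a ⊗ₜ[ℝ] b ∈ p) :
    tensorGrading A₁ A₂ m ≤ p := by
  apply iSup_le
  intro i
  rw [TensorProduct.range_map_eq_span_tmul]
  apply Submodule.span_le.mpr
  rintro x ⟨a, b, rfl⟩
  exact hp i a b a.2 b.2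

end TGHelpers

theorem tensor_hard_lefschetz {H₁ H₂ : Type}
    [AddCommGroup H₁] [Module ℝ H₁] [FiniteDimensional ℝ H₁]
    [AddCommGroup H₂] [Module ℝ H₂] [FiniteDimensional ℝ H₂]
    (A₁ : ℤ → Submodule ℝ H₁) (A₂ : ℤ → Submodule ℝ H₂)
    (hint₁ : DirectSum.IsInternal A₁) (hint₂ : DirectSum.IsInternal A₂)
    (l₁ : Module.End ℝ H₁) (l₂ : Module.End ℝ H₂)
    (hdeg₁ : ∀ j : ℤ, Submodule.map l₁ (A₁ j) ≤ A₁ (j + 2))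
    (hdeg₂ : ∀ j : ℤ, Submodule.map l₂ (A₂ j) ≤ A₂ (j + 2))
    (n₁ n₂ : ℤ)
    (hHL₁ : ∀ k : ℕ, 1 ≤ k →
      Submodule.map (l₁ ^ k) (A₁ (n₁ - k)) = A₁ (n₁ + k) ∧
      ∀ x ∈ A₁ (n₁ - k), (l₁ ^ k) x = 0 → x = 0)
    (hHL₂ : ∀ k : ℕ, 1 ≤ k →
      Submodule.map (l₂ ^ k) (A₂ (n₂ - k)) = A₂ (n₂ + k) ∧
      ∀ x ∈ A₂ (n₂ - k), (l₂ ^ k) x = 0 → x = 0)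
    (l : Module.End ℝ (H₁ ⊗[ℝ] H₂))
    (hl : l = TensorProduct.map l₁ LinearMap.id + TensorProduct.map LinearMap.id l₂) :
    ∀ k : ℕ, 1 ≤ k →
      Submodule.map (l ^ k) (tensorGrading A₁ A₂ (n₁ + n₂ - k))
          = tensorGrading A₁ A₂ (n₁ + n₂ + k) ∧
      ∀ x ∈ tensorGrading A₁ A₂ (n₁ + n₂ - k), (l ^ k) x = 0 → x = 0 := by
  subst hl
  haveI : FiniteDimensional ℝ (H₁ ⊗[ℝ] H₂) := Module.Finite.tensorProduct ℝ H₁ H₂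
  obtain ⟨f₁, hf₁deg, hf₁rel⟩ := exists_lowering l₁ n₁ (finrank ℝ H₁) A₁
    (Submodule.finrank_le _) hint₁.submodule_iSupIndep hdeg₁ hHL₁
  obtain ⟨f₂, hf₂deg, hf₂rel⟩ := exists_lowering l₂ n₂ (finrank ℝ H₂) A₂
    (Submodule.finrank_le _) hint₂.submodule_iSupIndep hdeg₂ hHL₂
  set h₁ : Module.End ℝ H₁ := l₁ * f₁ - f₁ * l₁ with hh₁
  set h₂ : Module.End ℝ H₂ := l₂ * f₂ - f₂ * l₂ with hh₂
  have h₁eig : ∀ j : ℤ, ∀ a ∈ A₁ j, h₁ a = ((j : ℝ) - n₁) • a := by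
    intro j a ha
    rw [hh₁]
    simp only [LinearMap.sub_apply, Module.End.mul_apply]
    exact hf₁rel j a ha
  have h₂eig : ∀ j : ℤ, ∀ b ∈ A₂ j, h₂ b = ((j : ℝ) - n₂) • b := by
    intro j b hb
    rw [hh₂]
    simp only [LinearMap.sub_apply, Module.End.mul_apply]
    exact hf₂rel j b hb
  -- commutation relations on the factors
  have comm_hl₁ : ∀ a : H₁, h₁ (l₁ a) = (2:ℝ) • l₁ a + l₁ (h₁ a) := by
    intro a
    have hmem : a ∈ ⨆ j, A₁ j := by rw [hint₁.submodule_iSup_eq_top]; trivial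
    refine Submodule.iSup_induction A₁
      (motive := fun x => h₁ (l₁ x) = (2:ℝ) • l₁ x + l₁ (h₁ x)) hmem ?_ (by simp) ?_
    · intro j x hx
      have hlx : l₁ x ∈ A₁ (j + 2) := hdeg₁ j (Submodule.mem_map_of_mem hx)
      rw [h₁eig (j + 2) _ hlx, h₁eig j x hx, map_smul,
        show (((j + 2 : ℤ)) : ℝ) - n₁ = ((j : ℝ) - n₁) + 2 from by push_cast; ring]
      module
    · intro x y hx hy
      simp only [map_add]
      rw [hx, hy]
      module
  have comm_hf₁ : ∀ a : H₁, h₁ (f₁ a) = -((2:ℝ) • f₁ a) + f₁ (h₁ a) := by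
    intro a
    have hmem : a ∈ ⨆ j, A₁ j := by rw [hint₁.submodule_iSup_eq_top]; trivial
    refine Submodule.iSup_induction A₁
      (motive := fun x => h₁ (f₁ x) = -((2:ℝ) • f₁ x) + f₁ (h₁ x)) hmem ?_ (by simp) ?_
    · intro j x hx
      have hfx : f₁ x ∈ A₁ (j - 2) := hf₁deg j (Submodule.mem_map_of_mem hx)
      rw [h₁eig (j - 2) _ hfx, h₁eig j x hx, map_smul,
        show (((j - 2 : ℤ)) : ℝ) - n₁ = ((j : ℝ) - n₁) - 2 from by push_cast; ring]
      module
    · intro x y hx hy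
      simp only [map_add]
      rw [hx, hy]
      module
  have comm_hl₂ : ∀ b : H₂, h₂ (l₂ b) = (2:ℝ) • l₂ b + l₂ (h₂ b) := by
    intro b
    have hmem : b ∈ ⨆ j, A₂ j := by rw [hint₂.submodule_iSup_eq_top]; trivial
    refine Submodule.iSup_induction A₂
      (motive := fun x => h₂ (l₂ x) = (2:ℝ) • l₂ x + l₂ (h₂ x)) hmem ?_ (by simp) ?_
    · intro j x hx
      have hlx : l₂ x ∈ A₂ (j + 2) := hdeg₂ j (Submodule.mem_map_of_mem hx)
      rw [h₂eig (j + 2) _ hlx, h₂eig j x hx, map_smul,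
        show (((j + 2 : ℤ)) : ℝ) - n₂ = ((j : ℝ) - n₂) + 2 from by push_cast; ring]
      module
    · intro x y hx hy
      simp only [map_add]
      rw [hx, hy]
      module
  have comm_hf₂ : ∀ b : H₂, h₂ (f₂ b) = -((2:ℝ) • f₂ b) + f₂ (h₂ b) := by
    intro b
    have hmem : b ∈ ⨆ j, A₂ j := by rw [hint₂.submodule_iSup_eq_top]; trivial
    refine Submodule.iSup_induction A₂
      (motive := fun x => h₂ (f₂ x) = -((2:ℝ) • f₂ x) + f₂ (h₂ x)) hmem ?_ (by simp) ?_
    · intro j x hx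
      have hfx : f₂ x ∈ A₂ (j - 2) := hf₂deg j (Submodule.mem_map_of_mem hx)
      rw [h₂eig (j - 2) _ hfx, h₂eig j x hx, map_smul,
        show (((j - 2 : ℤ)) : ℝ) - n₂ = ((j : ℝ) - n₂) - 2 from by push_cast; ring]
      module
    · intro x y hx hy
      simp only [map_add]
      rw [hx, hy]
      module
  -- tensor operators
  set E : Module.End ℝ (H₁ ⊗[ℝ] H₂) :=
    TensorProduct.map l₁ LinearMap.id + TensorProduct.map LinearMap.id l₂ with hE
  set F : Module.End ℝ (H₁ ⊗[ℝ] H₂) :=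
    TensorProduct.map f₁ LinearMap.id + TensorProduct.map LinearMap.id f₂ with hF
  set Hop : Module.End ℝ (H₁ ⊗[ℝ] H₂) :=
    TensorProduct.map h₁ LinearMap.id + TensorProduct.map LinearMap.id h₂ with hHop
  have hEtmul : ∀ (a : H₁) (b : H₂), E (a ⊗ₜ[ℝ] b) = l₁ a ⊗ₜ b + a ⊗ₜ l₂ b := by
    intro a b
    rw [hE]
    simp [TensorProduct.map_tmul]
  have hFtmul : ∀ (a : H₁) (b : H₂), F (a ⊗ₜ[ℝ] b) = f₁ a ⊗ₜ b + a ⊗ₜ f₂ b := by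
    intro a b
    rw [hF]
    simp [TensorProduct.map_tmul]
  have hHtmul : ∀ (a : H₁) (b : H₂), Hop (a ⊗ₜ[ℝ] b) = h₁ a ⊗ₜ b + a ⊗ₜ h₂ b := by
    intro a b
    rw [hHop]
    simp [TensorProduct.map_tmul]
  have hEF : ∀ x, E (F x) - F (E x) = Hop x := by
    have : E ∘ₗ F - F ∘ₗ E = Hop := by
      apply TensorProduct.ext'
      intro a b
      simp only [LinearMap.sub_apply, LinearMap.comp_apply]
      rw [hEtmul, hFtmul, hHtmul, map_add, map_add, hEtmul, hEtmul, hFtmul, hFtmul,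
        hh₁, hh₂]
      simp only [LinearMap.sub_apply, Module.End.mul_apply, sub_tmul, tmul_sub]
      abel
    intro x
    have h := LinearMap.ext_iff.mp this x
    simpa using h
  have hHE : ∀ x, Hop (E x) - E (Hop x) = (2:ℝ) • E x := by
    have : Hop ∘ₗ E - E ∘ₗ Hop = (2:ℝ) • E := by
      apply TensorProduct.ext'
      intro a b
      simp only [LinearMap.sub_apply, LinearMap.comp_apply, LinearMap.smul_apply]
      rw [hEtmul, hHtmul, map_add, map_add, hHtmul, hHtmul, hEtmul, hEtmul,
        comm_hl₁ a, comm_hl₂ b]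
      simp only [add_tmul, tmul_add, smul_tmul', tmul_smul, smul_add]
      abel
    intro x
    have h := LinearMap.ext_iff.mp this x
    simpa using h
  have hHF : ∀ x, Hop (F x) - F (Hop x) = -((2:ℝ) • F x) := by
    have : Hop ∘ₗ F - F ∘ₗ Hop = -((2:ℝ) • F) := by
      apply TensorProduct.ext'
      intro a b
      simp only [LinearMap.sub_apply, LinearMap.comp_apply, LinearMap.smul_apply,
        LinearMap.neg_apply]
      rw [hFtmul, hHtmul, map_add, map_add, hHtmul, hHtmul, hFtmul, hFtmul,
        comm_hf₁ a, comm_hf₂ b]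
      simp only [add_tmul, tmul_add, smul_tmul', tmul_smul, smul_add, neg_tmul, tmul_neg,
        neg_add_rev]
      abel
    intro x
    have h := LinearMap.ext_iff.mp this x
    simpa using h
  -- eigenvalue property on graded pieces
  have Heig : ∀ (m : ℤ), ∀ x ∈ tensorGrading A₁ A₂ m,
      Hop x = ((m : ℝ) - n₁ - n₂) • x := by
    intro m x hx
    have hsub : tensorGrading A₁ A₂ m ≤
        LinearMap.ker (Hop - ((m : ℝ) - n₁ - n₂) • LinearMap.id) := by
      apply tG_le
      intro i a b ha hb
      rw [LinearMap.mem_ker, LinearMap.sub_apply, LinearMap.smul_apply, LinearMap.id_apply,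
        sub_eq_zero, hHtmul, h₁eig i a ha, h₂eig (m - i) b hb, ← smul_tmul', tmul_smul,
        ← add_smul, show ((i : ℝ) - n₁) + (((m - i : ℤ) : ℝ) - n₂) = (m : ℝ) - n₁ - n₂ from by
          push_cast; ring, smul_tmul']
    have h := hsub hx
    rw [LinearMap.mem_ker, LinearMap.sub_apply, LinearMap.smul_apply, LinearMap.id_apply,
      sub_eq_zero] at h
    exact h
  -- degree properties
  have degE : ∀ m : ℤ, Submodule.map E (tensorGrading A₁ A₂ m) ≤ tensorGrading A₁ A₂ (m + 2) := by
    intro m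
    rw [Submodule.map_le_iff_le_comap]
    apply tG_le
    intro i a b ha hb
    rw [Submodule.mem_comap, hEtmul]
    apply Submodule.add_mem
    · have := tmul_mem_tG A₁ A₂ (i + 2) (m - i) (l₁ a) b (hdeg₁ i (Submodule.mem_map_of_mem ha)) hb
      rwa [show i + 2 + (m - i) = m + 2 from by ring] at this
    · have := tmul_mem_tG A₁ A₂ i (m - i + 2) a (l₂ b) ha
        (hdeg₂ (m - i) (Submodule.mem_map_of_mem hb))
      rwa [show i + (m - i + 2) = m + 2 from by ring] at this
  have degF : ∀ m : ℤ, Submodule.map F (tensorGrading A₁ A₂ m) ≤ tensorGrading A₁ A₂ (m - 2) := by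
    intro m
    rw [Submodule.map_le_iff_le_comap]
    apply tG_le
    intro i a b ha hb
    rw [Submodule.mem_comap, hFtmul]
    apply Submodule.add_mem
    · have := tmul_mem_tG A₁ A₂ (i - 2) (m - i) (f₁ a) b (hf₁deg i (Submodule.mem_map_of_mem ha)) hb
      rwa [show i - 2 + (m - i) = m - 2 from by ring] at this
    · have := tmul_mem_tG A₁ A₂ i (m - i - 2) a (f₂ b) ha
        (hf₂deg (m - i) (Submodule.mem_map_of_mem hb))
      rwa [show i + (m - i - 2) = m - 2 from by ring] at this
  have degEpow : ∀ (k : ℕ) (m : ℤ),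
      Submodule.map (E ^ k) (tensorGrading A₁ A₂ m) ≤ tensorGrading A₁ A₂ (m + 2 * k) := by
    intro k
    induction k with
    | zero =>
        intro m
        simp [Module.End.one_eq_id, Submodule.map_id]
    | succ k ih =>
        intro m
        have h1 : Submodule.map (E ^ (k + 1)) (tensorGrading A₁ A₂ m) =
            Submodule.map E (Submodule.map (E ^ k) (tensorGrading A₁ A₂ m)) := by
          rw [pow_succ', Module.End.mul_eq_comp, Submodule.map_comp]
        rw [h1]
        refine le_trans (Submodule.map_mono (ih m)) (le_trans (degE _) ?_)
        rw [show m + 2 * (k : ℤ) + 2 = m + 2 * ((k : ℕ) + 1 : ℕ) from by push_cast; ring]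
  have degFpow : ∀ (k : ℕ) (m : ℤ),
      Submodule.map (F ^ k) (tensorGrading A₁ A₂ m) ≤ tensorGrading A₁ A₂ (m - 2 * k) := by
    intro k
    induction k with
    | zero =>
        intro m
        simp [Module.End.one_eq_id, Submodule.map_id]
    | succ k ih =>
        intro m
        have h1 : Submodule.map (F ^ (k + 1)) (tensorGrading A₁ A₂ m) =
            Submodule.map F (Submodule.map (F ^ k) (tensorGrading A₁ A₂ m)) := by
          rw [pow_succ', Module.End.mul_eq_comp, Submodule.map_comp]
        rw [h1]
        refine le_trans (Submodule.map_mono (ih m)) (le_trans (degF _) ?_)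
        rw [show m - 2 * (k : ℤ) - 2 = m - 2 * ((k : ℕ) + 1 : ℕ) from by push_cast; ring]
  -- main conclusion
  intro k hk
  have hinj : ∀ x ∈ tensorGrading A₁ A₂ (n₁ + n₂ - k), (E ^ k) x = 0 → x = 0 := by
    intro x hx hx0
    refine sl2_weight_inj E Hop F hEF hHE hHF k hk x ?_ hx0
    rw [Heig _ x hx]
    congr 1
    push_cast
    ring
  have hinjF : ∀ y ∈ tensorGrading A₁ A₂ (n₁ + n₂ + k), (F ^ k) y = 0 → y = 0 := by
    intro y hy hy0
    refine sl2_weight_inj F (-Hop) E ?_ ?_ ?_ k hk y ?_ hy0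
    · intro x
      simp only [LinearMap.neg_apply]
      rw [← hEF x]
      abel
    · intro x
      simp only [LinearMap.neg_apply, map_neg]
      rw [show -Hop (F x) - -F (Hop x) = -(Hop (F x) - F (Hop x)) from by abel, hHF x,
        neg_neg]
    · intro x
      simp only [LinearMap.neg_apply, map_neg]
      rw [show -Hop (E x) - -E (Hop x) = -(Hop (E x) - E (Hop x)) from by abel, hHE x]
    · simp only [LinearMap.neg_apply]
      rw [Heig _ y hy,
        show (((n₁ + n₂ + k : ℤ)) : ℝ) - n₁ - n₂ = (k : ℝ) from by push_cast; ring,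
        ← neg_smul]
  refine ⟨?_, hinj⟩
  have hle : Submodule.map (E ^ k) (tensorGrading A₁ A₂ (n₁ + n₂ - k)) ≤
      tensorGrading A₁ A₂ (n₁ + n₂ + k) := by
    refine le_trans (degEpow k _) ?_
    rw [show n₁ + n₂ - (k : ℤ) + 2 * (k : ℕ) = n₁ + n₂ + k from by push_cast; ring]
  have hleF : Submodule.map (F ^ k) (tensorGrading A₁ A₂ (n₁ + n₂ + k)) ≤
      tensorGrading A₁ A₂ (n₁ + n₂ - k) := by
    refine le_trans (degFpow k _) ?_
    rw [show n₁ + n₂ + (k : ℤ) - 2 * (k : ℕ) = n₁ + n₂ - k from by push_cast; ring]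
  have e1 : finrank ℝ ↥(Submodule.map (E ^ k) (tensorGrading A₁ A₂ (n₁ + n₂ - k))) =
      finrank ℝ ↥(tensorGrading A₁ A₂ (n₁ + n₂ - k)) := by
    have hrn := LinearMap.finrank_range_add_finrank_ker
      ((E ^ k).domRestrict (tensorGrading A₁ A₂ (n₁ + n₂ - k)))
    rw [LinearMap.range_domRestrict] at hrn
    have hker : LinearMap.ker ((E ^ k).domRestrict (tensorGrading A₁ A₂ (n₁ + n₂ - k))) = ⊥ := by
      rw [eq_bot_iff]
      intro z hz
      rw [LinearMap.mem_ker, LinearMap.domRestrict_apply] at hz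
      rw [Submodule.mem_bot]
      exact Subtype.ext (hinj z.1 z.2 hz)
    rw [hker, finrank_bot, add_zero] at hrn
    exact hrn
  have e2 : finrank ℝ ↥(Submodule.map (F ^ k) (tensorGrading A₁ A₂ (n₁ + n₂ + k))) =
      finrank ℝ ↥(tensorGrading A₁ A₂ (n₁ + n₂ + k)) := by
    have hrn := LinearMap.finrank_range_add_finrank_ker
      ((F ^ k).domRestrict (tensorGrading A₁ A₂ (n₁ + n₂ + k)))
    rw [LinearMap.range_domRestrict] at hrn
    have hker : LinearMap.ker ((F ^ k).domRestrict (tensorGrading A₁ A₂ (n₁ + n₂ + k))) = ⊥ := by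
      rw [eq_bot_iff]
      intro z hz
      rw [LinearMap.mem_ker, LinearMap.domRestrict_apply] at hz
      rw [Submodule.mem_bot]
      exact Subtype.ext (hinjF z.1 z.2 hz)
    rw [hker, finrank_bot, add_zero] at hrn
    exact hrn
  have ineq1 : finrank ℝ ↥(tensorGrading A₁ A₂ (n₁ + n₂ - k)) ≤
      finrank ℝ ↥(tensorGrading A₁ A₂ (n₁ + n₂ + k)) := by
    rw [← e1]
    exact Submodule.finrank_mono hle
  have ineq2 : finrank ℝ ↥(tensorGrading A₁ A₂ (n₁ + n₂ + k)) ≤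
      finrank ℝ ↥(tensorGrading A₁ A₂ (n₁ + n₂ - k)) := by
    rw [← e2]
    exact Submodule.finrank_mono hleF
  exact Submodule.eq_of_le_of_finrank_le hle (by omega)
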